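/- arXiv:1009.5329 — 2 statements merged into one kernel-verified Lean document; each statement's English description precedes it below -/
import Mathlib

section
/- Let y satisfy π < y < 2π. Then −∫_{x=0}^{π} arctan(√(tan²(x/2)/sin²(y/2) + 1)·tan(y/2)) / √(tan²(x/2)/sin²(y/2) + 1) · sin(x) dx = (4·tan(y/2)/cos²(y/2)) · ∫_{z=y/2}^{π/2} (π − z)·cos²(z) dz, where the integral over z is the oriented (interval) integral from y/2 to π/2. -/
open Real Set

/-!
Put a = y/2 ∈ (π/2, π) and substitute z = arccos (cos (x/2) · cos a), which runs from a to π/2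
as x runs over [0, π]. The square root equals sin z / (sin a · cos (x/2)), so the arctan is
arctan (tan z) = z - π, the principal value since z ∈ (π/2, π); after multiplying by
sin x = 2 sin (x/2) cos (x/2) the integrand becomes -(4 tan a / cos² a) (π - z) cos² z · dz/dx.
-/

lemma arctan_sqrt_one_sub_sq_div_of_neg {u : ℝ} (hu : u < 0) :
    arctan (√(1 - u ^ 2) / u) = arccos u - π := by
  have h := arccos_eq_arctan (neg_pos.mpr hu)
  rw [arccos_neg, neg_sq, div_neg, arctan_neg] at h
  linarith

lemma sqrt_tan_sq_div_sin_sq_add_one {a t : ℝ} (ha : 0 < sin a) (ht : 0 < cos t) :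
    √(tan t ^ 2 / sin a ^ 2 + 1) = √(1 - (cos t * cos a) ^ 2) / (sin a * cos t) := by
  have hpos : 0 < sin a * cos t := mul_pos ha ht
  rw [eq_div_iff hpos.ne', ← sqrt_sq hpos.le, ← sqrt_mul (by positivity)]
  congr 1
  rw [tan_eq_sin_div_cos]
  field_simp
  linear_combination sin_sq_add_cos_sq t + cos t ^ 2 * sin_sq_add_cos_sq a

lemma arctan_div_sqrt_eq {a t : ℝ} (ha : 0 < sin a) (ha' : cos a < 0) (ht : 0 < cos t) :
    arctan (√(tan t ^ 2 / sin a ^ 2 + 1) * tan a) / √(tan t ^ 2 / sin a ^ 2 + 1)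
      = (arccos (cos t * cos a) - π) * (sin a * cos t) / √(1 - (cos t * cos a) ^ 2) := by
  have hu : cos t * cos a < 0 := mul_neg_of_pos_of_neg ht ha'
  have harg : √(1 - (cos t * cos a) ^ 2) / (sin a * cos t) * tan a
      = √(1 - (cos t * cos a) ^ 2) / (cos t * cos a) := by
    rw [tan_eq_sin_div_cos]
    field_simp
  rw [sqrt_tan_sq_div_sin_sq_add_one ha ht, harg, arctan_sqrt_one_sub_sq_div_of_neg hu,
    div_div_eq_mul_div]

lemma abs_cos_mul_lt_one {c : ℝ} (hc : |c| < 1) (θ : ℝ) : |cos θ * c| < 1 := by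
  rw [abs_mul]
  nlinarith [abs_cos_le_one θ, abs_nonneg (cos θ), abs_nonneg c]

lemma abs_cos_lt_one_of_sin_ne_zero {a : ℝ} (h : sin a ≠ 0) : |cos a| < 1 :=
  (sq_lt_one_iff_abs_lt_one _).mp <| by nlinarith [sin_sq_add_cos_sq a, sq_pos_of_ne_zero h]

lemma hasDerivAt_arccos_cos_half_mul {c : ℝ} (hc : |c| < 1) (x : ℝ) :
    HasDerivAt (fun x => arccos (cos (x / 2) * c))
      (sin (x / 2) * c / (2 * √(1 - (cos (x / 2) * c) ^ 2))) x := by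
  obtain ⟨hu₁, hu₂⟩ := abs_lt.mp (abs_cos_mul_lt_one hc (x / 2))
  have hu : HasDerivAt (fun x => cos (x / 2) * c) (-sin (x / 2) * (1 / 2) * c) x :=
    (((hasDerivAt_id x).div_const 2).cos).mul_const c
  refine ((hasDerivAt_arccos hu₁.ne' hu₂.ne).comp x hu).congr_deriv ?_
  have : √(1 - (cos (x / 2) * c) ^ 2) ≠ 0 := (sqrt_pos.mpr (by nlinarith)).ne'
  field_simp

lemma continuous_deriv_arccos_cos_half_mul {c : ℝ} (hc : |c| < 1) :
    Continuous fun x => sin (x / 2) * c / (2 * √(1 - (cos (x / 2) * c) ^ 2)) := by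
  refine .div (by fun_prop) (by fun_prop) fun x => ?_
  have : 0 < 1 - (cos (x / 2) * c) ^ 2 := by
    linarith [(sq_lt_one_iff_abs_lt_one _).mpr (abs_cos_mul_lt_one hc (x / 2))]
  positivity

/-- The right-hand side has the shape `-(K * ((g ∘ f) x * f' x))` of the substitution rule. -/
lemma crofton_integrand_eq {a x : ℝ} (hsa : 0 < sin a) (hca : cos a < 0) (hx : x ∈ Icc 0 π) :
    arctan (√(tan (x / 2) ^ 2 / sin a ^ 2 + 1) * tan a) / √(tan (x / 2) ^ 2 / sin a ^ 2 + 1)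
        * sin x
      = -(4 * tan a / cos a ^ 2 * ((π - arccos (cos (x / 2) * cos a))
          * cos (arccos (cos (x / 2) * cos a)) ^ 2
          * (sin (x / 2) * cos a / (2 * √(1 - (cos (x / 2) * cos a) ^ 2))))) := by
  obtain ⟨hx₀, hxπ⟩ := hx
  rcases hxπ.eq_or_lt with rfl | hxπ
  · simp [cos_pi_div_two]
  have hcx : 0 < cos (x / 2) := cos_pos_of_mem_Ioo ⟨by linarith, by linarith⟩
  have hu : |cos (x / 2) * cos a| < 1 :=
    abs_cos_mul_lt_one (abs_cos_lt_one_of_sin_ne_zero hsa.ne') _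
  have hs : 0 < √(1 - (cos (x / 2) * cos a) ^ 2) :=
    sqrt_pos.mpr (by linarith [(sq_lt_one_iff_abs_lt_one _).mpr hu])
  have hsin : sin x = 2 * sin (x / 2) * cos (x / 2) := by
    rw [← sin_two_mul]; ring_nf
  obtain ⟨hu₁, hu₂⟩ := abs_lt.mp hu
  rw [arctan_div_sqrt_eq hsa hca hcx, cos_arccos hu₁.le hu₂.le, hsin, tan_eq_sin_div_cos]
  field_simp [hca.ne]
  ring

/-- The Crofton substitution cos z = cos(x/2)cos(y/2) reduces the area-density
integral (case π < y < 2π) to the same elementary integral (with the integral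
over z taken as the oriented integral from y/2 to π/2). -/
theorem crofton_substitution_gt_pi (y : ℝ) (h0 : π < y) (h1 : y < 2 * π) :
    -(∫ x in (0:ℝ)..π,
      Real.arctan (Real.sqrt (Real.tan (x / 2) ^ 2 / Real.sin (y / 2) ^ 2 + 1) *
          Real.tan (y / 2)) /
        Real.sqrt (Real.tan (x / 2) ^ 2 / Real.sin (y / 2) ^ 2 + 1) * Real.sin x)
    = (4 * Real.tan (y / 2) / Real.cos (y / 2) ^ 2) *
        ∫ z in (y / 2)..(π / 2), (π - z) * Real.cos z ^ 2 := by
  have hs : 0 < sin (y / 2) := sin_pos_of_pos_of_lt_pi (by linarith) (by linarith)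
  have hc : cos (y / 2) < 0 := cos_neg_of_pi_div_two_lt_of_lt (by linarith) (by linarith)
  have hc₁ := abs_cos_lt_one_of_sin_ne_zero hs.ne'
  have hsubst := intervalIntegral.integral_comp_mul_deriv (a := 0) (b := π)
    (g := fun z => (π - z) * cos z ^ 2) (fun x _ => hasDerivAt_arccos_cos_half_mul hc₁ x)
    (continuous_deriv_arccos_cos_half_mul hc₁).continuousOn (by fun_prop)
  rw [intervalIntegral.integral_congr fun x hx =>
      crofton_integrand_eq hs hc (by rwa [uIcc_of_le pi_pos.le] at hx),
    intervalIntegral.integral_neg, neg_neg, intervalIntegral.integral_const_mul]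
  congr 1
  simpa [arccos_cos (by linarith : 0 ≤ y / 2) (by linarith)] using hsubst
end

section
/- Define the complete elliptic integrals K(ζ) = ∫_{θ=0}^{π/2} 1/√(1 − ζ²·sin²(θ)) dθ and E(ζ) = ∫_{θ=0}^{π/2} √(1 − ζ²·sin²(θ)) dθ. Let κ and τ be real numbers with 0 < κ, 2κ < τ, and τ < 2π. Then ∫_{ρ=τ/2−κ}^{τ/2} sin(τ−κ−ρ)·sin(κ)·sin(ρ) / √(sin²(κ)·sin²(ρ) − [cos(κ)·cos(ρ) − cos(τ−κ−ρ)]²) dρ = sin(κ) · [E(sin(κ/2)) − cos²((τ−κ)/2)·K(sin(κ/2))] / √(cos²(κ/2) − cos²((τ−κ)/2)). -/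
open Real

/-- Complete elliptic integral of the first kind. -/
noncomputable def ellipticK (ζ : ℝ) : ℝ :=
  ∫ θ in (0:ℝ)..(π / 2), 1 / Real.sqrt (1 - ζ ^ 2 * Real.sin θ ^ 2)

/-- Complete elliptic integral of the second kind. -/
noncomputable def ellipticE (ζ : ℝ) : ℝ :=
  ∫ θ in (0:ℝ)..(π / 2), Real.sqrt (1 - ζ ^ 2 * Real.sin θ ^ 2)

/-!
Write `a = κ / 2` and `m = (τ - κ) / 2` and shift `ρ = m + x`, so that `x` runs over `[-a, a]`.
Product-to-sum formulas factor the numerator as `sin κ (sin² m - sin² x)` and the radicand as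
`4 (cos² a - cos² m) (sin² a - sin² x)`. The substitution `sin x = sin a · sin θ` over
`θ ∈ [-π/2, π/2]` removes the singular square root and leaves the even integrand
`(sin² m - k² sin² θ) / √(1 - k² sin² θ)` with `k = sin a`, whose integral is
`2 E(k) - 2 cos² m · K(k)`.
-/

open Set MeasureTheory intervalIntegral

theorem sin_add_mul_sin_sub (u v : ℝ) : sin (u + v) * sin (u - v) = sin u ^ 2 - sin v ^ 2 := by
  rw [sin_add, sin_sub]
  linear_combination sin u ^ 2 * sin_sq_add_cos_sq v - sin v ^ 2 * sin_sq_add_cos_sq u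

theorem cos_sub_sub_cos_add (u v : ℝ) : cos (u - v) - cos (u + v) = 2 * sin u * sin v := by
  rw [cos_sub, cos_add]
  ring

theorem perimeter_radicand_eq (κ m x : ℝ) :
    sin κ ^ 2 * sin (m + x) ^ 2 - (cos κ * cos (m + x) - cos (m - x)) ^ 2 =
      4 * (cos (κ / 2) ^ 2 - cos m ^ 2) * (sin (κ / 2) ^ 2 - sin x ^ 2) := by
  have factor : sin κ ^ 2 * sin (m + x) ^ 2 - (cos κ * cos (m + x) - cos (m - x)) ^ 2 =
      (cos (m - x) - cos (κ + (m + x))) * (cos (κ - (m + x)) - cos (m - x)) := by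
    rw [cos_add κ, cos_sub κ]
    ring
  have h₁ : cos (m - x) - cos (κ + (m + x)) = 2 * sin (m + κ / 2) * sin (κ / 2 + x) := by
    rw [← cos_sub_sub_cos_add]
    congr 2 <;> ring
  have h₂ : cos (κ - (m + x)) - cos (m - x) = 2 * sin (κ / 2 - x) * sin (m - κ / 2) := by
    rw [← cos_sub_sub_cos_add]
    congr 2 <;> ring
  have hm := sin_add_mul_sin_sub m (κ / 2)
  have hx := sin_add_mul_sin_sub (κ / 2) x
  rw [factor, h₁, h₂, cos_sq' (κ / 2), cos_sq' m]
  linear_combination (4 * sin (κ / 2 + x) * sin (κ / 2 - x)) * hm +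
    (4 * (sin m ^ 2 - sin (κ / 2) ^ 2)) * hx

theorem perimeter_integrand_eq (κ m x : ℝ) (hD : 0 ≤ cos (κ / 2) ^ 2 - cos m ^ 2) :
    sin (m - x) * sin κ * sin (m + x) /
        √(sin κ ^ 2 * sin (m + x) ^ 2 - (cos κ * cos (m + x) - cos (m - x)) ^ 2) =
      sin κ / (2 * √(cos (κ / 2) ^ 2 - cos m ^ 2)) *
        ((sin m ^ 2 - sin x ^ 2) / √(sin (κ / 2) ^ 2 - sin x ^ 2)) := by
  have hsqrt4 : √(4 : ℝ) = 2 := by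
    rw [show (4 : ℝ) = 2 ^ 2 by norm_num, sqrt_sq zero_le_two]
  rw [perimeter_radicand_eq, sqrt_mul (by positivity), sqrt_mul zero_le_four, hsqrt4,
    ← sin_add_mul_sin_sub m x]
  ring

theorem integral_neg_self_eq_two_mul_of_even {f : ℝ → ℝ} (hf : Continuous f)
    (heven : ∀ x, f (-x) = f x) (b : ℝ) : ∫ x in -b..b, f x = 2 * ∫ x in 0..b, f x := by
  have hleft : ∫ x in -b..0, f x = ∫ x in 0..b, f x := by
    simpa [heven] using (integral_comp_neg (a := 0) (b := b) f).symm
  rw [← integral_add_adjacent_intervals (hf.intervalIntegrable (-b) 0)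
    (hf.intervalIntegrable 0 b), hleft, two_mul]

theorem integral_eq_integral_arcsin_mul_sin {k : ℝ} (hk₀ : 0 ≤ k) (hk₁ : k ≤ 1) (g : ℝ → ℝ) :
    ∫ x in -arcsin k..arcsin k, g x =
      ∫ θ in -(π / 2)..π / 2, k * cos θ / √(1 - (k * sin θ) ^ 2) * g (arcsin (k * sin θ)) := by
  have hderiv : ∀ θ ∈ Ioo (-(π / 2)) (π / 2), HasDerivAt (fun θ => arcsin (k * sin θ))
      (k * cos θ / √(1 - (k * sin θ) ^ 2)) θ := by
    intro θ hθ
    have hlo : -1 < sin θ := by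
      simpa using sin_lt_sin_of_lt_of_le_pi_div_two le_rfl hθ.2.le hθ.1
    have hhi : sin θ < 1 := by
      simpa using sin_lt_sin_of_lt_of_le_pi_div_two hθ.1.le le_rfl hθ.2
    have h₁ : k * sin θ ≠ -1 := by nlinarith
    have h₂ : k * sin θ ≠ 1 := by nlinarith
    refine ((hasDerivAt_arcsin h₁ h₂).comp θ ((hasDerivAt_sin θ).const_mul k)).congr_deriv ?_
    ring
  have hmono : ∀ θ ∈ Ioo (-(π / 2)) (π / 2), 0 ≤ k * cos θ / √(1 - (k * sin θ) ^ 2) :=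
    fun θ hθ => div_nonneg (mul_nonneg hk₀ (cos_pos_of_mem_Ioo hθ).le) (sqrt_nonneg _)
  have hsub := integral_Icc_deriv_smul_of_deriv_nonneg (g := g)
    (f := fun θ => arcsin (k * sin θ)) (by fun_prop) hderiv hmono (by linarith [pi_pos])
  simp only [sin_neg, sin_pi_div_two, mul_neg, mul_one, arcsin_neg, smul_eq_mul] at hsub
  rw [integral_of_le (by linarith [arcsin_nonneg.mpr hk₀]), integral_of_le (by linarith [pi_pos]),
    ← integral_Icc_eq_integral_Ioc, ← integral_Icc_eq_integral_Ioc, hsub]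

theorem integral_sub_sin_sq_div_sqrt_sin_sq_sub_sin_sq {a : ℝ} (ha₀ : 0 < a) (ha : a < π / 2)
    (c : ℝ) :
    ∫ x in -a..a, (c - sin x ^ 2) / √(sin a ^ 2 - sin x ^ 2) =
      2 * (ellipticE (sin a) - (1 - c) * ellipticK (sin a)) := by
  set k := sin a with hk
  have hk₀ : 0 < k := sin_pos_of_pos_of_lt_pi ha₀ (by linarith [pi_pos])
  have hk₁ : k < 1 := by
    simpa using sin_lt_sin_of_lt_of_le_pi_div_two (by linarith) le_rfl ha
  have hq : ∀ θ, 0 < 1 - k ^ 2 * sin θ ^ 2 := fun θ => by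
    nlinarith [sin_sq_le_one θ, mul_pos hk₀ hk₀]
  have hq_cont : Continuous fun θ => √(1 - k ^ 2 * sin θ ^ 2) := by fun_prop
  have hq_inv_cont : Continuous fun θ => 1 / √(1 - k ^ 2 * sin θ ^ 2) :=
    continuous_const.div hq_cont fun θ => (sqrt_pos.mpr (hq θ)).ne'
  have hsubst := integral_eq_integral_arcsin_mul_sin hk₀.le hk₁.le
    (fun x => (c - sin x ^ 2) / √(k ^ 2 - sin x ^ 2))
  rw [hk, arcsin_sin (by linarith) (by linarith), ← hk] at hsubst
  calc ∫ x in -a..a, (c - sin x ^ 2) / √(k ^ 2 - sin x ^ 2)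
      = ∫ θ in -(π / 2)..π / 2, (c - k ^ 2 * sin θ ^ 2) / √(1 - k ^ 2 * sin θ ^ 2) := by
        rw [hsubst]
        refine integral_congr_Ioo_of_le (by linarith [pi_pos]) fun θ hθ => ?_
        have hcos : 0 < cos θ := cos_pos_of_mem_Ioo hθ
        have hkcos : 0 < k * cos θ := mul_pos hk₀ hcos
        have hrad : k ^ 2 - (k * sin θ) ^ 2 = (k * cos θ) ^ 2 := by
          linear_combination (-k ^ 2) * sin_sq_add_cos_sq θ
        have hks : k * sin θ ∈ Icc (-1) 1 :=
          ⟨by nlinarith [neg_one_le_sin θ], by nlinarith [sin_le_one θ]⟩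
        rw [sin_arcsin' hks, hrad, sqrt_sq hkcos.le, mul_pow]
        field_simp
    _ = 2 * ∫ θ in 0..π / 2, (c - k ^ 2 * sin θ ^ 2) / √(1 - k ^ 2 * sin θ ^ 2) :=
        integral_neg_self_eq_two_mul_of_even
          (f := fun θ => (c - k ^ 2 * sin θ ^ 2) / √(1 - k ^ 2 * sin θ ^ 2))
          ((continuous_const.sub (by fun_prop)).div hq_cont fun θ => (sqrt_pos.mpr (hq θ)).ne')
          (fun θ => by rw [sin_neg, neg_sq]) _
    _ = 2 * (ellipticE k - (1 - c) * ellipticK k) := by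
        congr 1
        rw [ellipticE, ellipticK, ← intervalIntegral.integral_const_mul,
          ← integral_sub (hq_cont.intervalIntegrable _ _)
            ((hq_inv_cont.intervalIntegrable _ _).const_mul _)]
        refine integral_congr fun θ _ => ?_
        have hsq := sq_sqrt (hq θ).le
        have hpos := sqrt_pos.mpr (hq θ)
        field_simp
        linear_combination -hsq

/-- The conditional perimeter-density integral of a random spherical triangle,
given one side equal to κ, in terms of complete elliptic integrals
(Jones/Benyon-Tinker). -/
theorem conditional_perimeter_density_elliptic (κ τ : ℝ)
    (hκ : 0 < κ) (hκτ : 2 * κ < τ) (hτ : τ < 2 * π) :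
    (∫ ρ in (τ / 2 - κ)..(τ / 2),
      Real.sin (τ - κ - ρ) * Real.sin κ * Real.sin ρ /
        Real.sqrt (Real.sin κ ^ 2 * Real.sin ρ ^ 2 -
          (Real.cos κ * Real.cos ρ - Real.cos (τ - κ - ρ)) ^ 2))
    = Real.sin κ *
        (ellipticE (Real.sin (κ / 2)) -
          Real.cos ((τ - κ) / 2) ^ 2 * ellipticK (Real.sin (κ / 2))) /
        Real.sqrt (Real.cos (κ / 2) ^ 2 - Real.cos ((τ - κ) / 2) ^ 2) := by
  set m := (τ - κ) / 2 with hm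
  have hD : 0 ≤ cos (κ / 2) ^ 2 - cos m ^ 2 := by
    rw [cos_sq', cos_sq', sub_sub_sub_cancel_left, ← sin_add_mul_sin_sub]
    exact mul_nonneg (sin_nonneg_of_nonneg_of_le_pi (by linarith) (by linarith))
      (sin_nonneg_of_nonneg_of_le_pi (by linarith) (by linarith))
  rw [show τ / 2 - κ = -(κ / 2) + m by ring, show τ / 2 = κ / 2 + m by ring,
    ← integral_comp_add_right]
  calc _ = ∫ x in -(κ / 2)..κ / 2, sin κ / (2 * √(cos (κ / 2) ^ 2 - cos m ^ 2)) *
        ((sin m ^ 2 - sin x ^ 2) / √(sin (κ / 2) ^ 2 - sin x ^ 2)) := by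
        refine integral_congr fun x _ => ?_
        rw [show τ - κ - (x + m) = m - x by ring, add_comm x m]
        exact perimeter_integrand_eq κ m x hD
    _ = _ := by
        rw [intervalIntegral.integral_const_mul,
          integral_sub_sin_sq_div_sqrt_sin_sq_sub_sin_sq (by linarith) (by linarith), ← cos_sq']
        ring
end
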